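/- In a nearly conformally symmetric manifold (NCS)_n, i.e. one where ∇_a R_{bc} − ∇_b R_{ac} = (1/(2(n−1)))(g_{bc}∇_a R − g_{ac}∇_b R), the identity R_{am}R_{bce}^m + R_{bm}R_{cae}^m + R_{cm}R_{abe}^m = 0 holds. -/

import Mathlib

/-!
Contract the Ricci identity for `[∇_m, ∇_a] R_{bce}{}^m` and take the cyclic sum over `(a, b, c)`.
The terms `∇_m ∇_a R_{bce}{}^m` cancel by the second Bianchi identity. By the contracted Bianchi
identity and the differentiated NCS condition, `∇_a ∇_m R_{bce}{}^m` equals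
`κ (g_{be} ∇_a ∇_c R - g_{ce} ∇_a ∇_b R)`, whose cyclic sum vanishes because the Hessian of the
scalar curvature is symmetric: the curvature endomorphisms are skew for `g`, so they kill traces.
The terms quadratic in the curvature are traces `tr (A B)` of products; after the first Bianchi
identity their cyclic sum cancels in pairs via `tr (A B) = tr (B A)`. What remains is the Ricci
term.
-/

open Finset Matrix

namespace Curvature

variable {ι : Type*} [Fintype ι]

def ricci (T : ι → ι → ι → ι → ℝ) (b c : ι) : ℝ := ∑ m, T b m c m

def scalarCurvature (ginv : ι → ι → ℝ) (T : ι → ι → ι → ι → ℝ) : ℝ :=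
  ∑ p, ∑ q, ginv p q * ricci T p q

/-- The first slot of `T` is a derivative index: `divergence T a b c = ∇_m T_{abc}{}^m`. -/
def divergence (T : ι → ι → ι → ι → ι → ℝ) (a b c : ι) : ℝ := ∑ m, T m a b c m

/-- The action of an endomorphism `M` (with `M c k = M_c{}^k`) on a `(3,1)`-tensor as a
derivation; `[∇_x, ∇_y]` acts on curvature tensors in this way with `M = R_{xy}`. -/
def derivAct (M : ι → ι → ℝ) (T : ι → ι → ι → ι → ℝ) (c d e f : ι) : ℝ :=
  -(∑ k, M c k * T k d e f) - (∑ k, M d k * T c k e f) - (∑ k, M e k * T c d k f)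
    + ∑ k, M k f * T c d e k

def pairing (R : ι → ι → ι → ι → ℝ) (a b c d : ι) : ℝ := ∑ m, ∑ k, R m a b k * R k c d m

def quadratic (R : ι → ι → ι → ι → ℝ) (a b c d : ι) : ℝ :=
  pairing R a b c d - pairing R a c b d + pairing R a d c b - pairing R a d b c

theorem ricci_sub (T T' : ι → ι → ι → ι → ℝ) (b c : ι) :
    ricci (T - T') b c = ricci T b c - ricci T' b c :=
  sum_sub_distrib ..

theorem scalarCurvature_sub (ginv : ι → ι → ℝ) (T T' : ι → ι → ι → ι → ℝ) :
    scalarCurvature ginv (T - T') = scalarCurvature ginv T - scalarCurvature ginv T' := by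
  simp only [scalarCurvature, ricci_sub, mul_sub, sum_sub_distrib]

theorem ricci_derivAct (M : ι → ι → ℝ) (T : ι → ι → ι → ι → ℝ) (p q : ι) :
    ricci (derivAct M T) p q = -(∑ k, M p k * ricci T k q) - ∑ k, ricci T p k * M q k := by
  have hcancel : ∑ m, ∑ k, M m k * T p k q m = ∑ m, ∑ k, M k m * T p m q k := sum_comm
  simp only [ricci, derivAct, sum_add_distrib, sum_sub_distrib, sum_neg_distrib, mul_sum, sum_mul]
  rw [hcancel, sum_comm (f := fun m k => M p k * T k m q m),
    sum_comm (f := fun m k => M q k * T p m k m)]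
  simp only [mul_comm (M q _)]
  ring

theorem sum_mul_eq_trace_mul_transpose (A B : Matrix ι ι ℝ) :
    ∑ p, ∑ q, A p q * B p q = (A * Bᵀ).trace := by
  simp [Matrix.trace, Matrix.mul_apply]

theorem trace_mul_transpose_derivation_eq_zero {G M : Matrix ι ι ℝ} (hG : Gᵀ = G)
    (hGM : (G * M)ᵀ = -(G * M)) (S : Matrix ι ι ℝ) :
    (G * (M * S + S * Mᵀ)ᵀ).trace = 0 := by
  have hskew : (G * Sᵀ * Mᵀ).trace = -(G * M * Sᵀ).trace := by
    calc (G * Sᵀ * Mᵀ).trace = (Mᵀ * G * Sᵀ).trace := Matrix.trace_mul_cycle ..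
      _ = ((G * M)ᵀ * Sᵀ).trace := by rw [Matrix.transpose_mul, hG]
      _ = -(G * M * Sᵀ).trace := by rw [hGM, Matrix.neg_mul, Matrix.trace_neg]
  rw [Matrix.transpose_add, Matrix.transpose_mul, Matrix.transpose_mul, Matrix.transpose_transpose,
    Matrix.mul_add, Matrix.trace_add, ← Matrix.mul_assoc, ← Matrix.mul_assoc, hskew, neg_add_cancel]

theorem scalarCurvature_derivAct_eq_zero_of_skew {ginv M : ι → ι → ℝ}
    (hginv : (of ginv)ᵀ = of ginv)
    (hM : (of ginv * of M)ᵀ = -(of ginv * of M)) (T : ι → ι → ι → ι → ℝ) :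
    scalarCurvature ginv (derivAct M T) = 0 := by
  have h := trace_mul_transpose_derivation_eq_zero hginv hM (of (ricci T))
  rw [← sum_mul_eq_trace_mul_transpose] at h
  simp only [Matrix.add_apply, mul_apply, transpose_apply, of_apply] at h
  rw [scalarCurvature, ← neg_eq_zero, ← h, ← sum_neg_distrib]
  refine sum_congr rfl fun p _ => ?_
  rw [← sum_neg_distrib]
  refine sum_congr rfl fun q _ => ?_
  rw [ricci_derivAct]
  ring

theorem transpose_mul_eq_neg_of_mul_eq_one [DecidableEq ι] {G Gi M : Matrix ι ι ℝ}
    (hGi : Giᵀ = Gi) (hinv : Gi * G = 1) (hM : (M * G)ᵀ = -(M * G)) :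
    (Gi * M)ᵀ = -(Gi * M) := by
  have hraise : Gi * M = Gi * (M * G) * Gi := by
    rw [Matrix.mul_assoc, Matrix.mul_assoc, mul_eq_one_comm.mp hinv, Matrix.mul_one]
  rw [hraise, Matrix.transpose_mul, Matrix.transpose_mul, hGi, hM]
  simp only [Matrix.neg_mul, Matrix.mul_neg, Matrix.mul_assoc]

theorem transpose_lowered_eq_neg {R : ι → ι → ι → ι → ℝ} {g : ι → ι → ℝ}
    (hAnti : ∀ a b c d, R a b c d = -R b a c d)
    (hPair : ∀ a b c d, ∑ e, R a b c e * g e d = ∑ e, R c d a e * g e b) (x y : ι) :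
    (of (R x y) * of g)ᵀ = -(of (R x y) * of g) := by
  ext p d
  simp only [transpose_apply, Matrix.neg_apply, mul_apply, of_apply, hPair x y, ← sum_neg_distrib]
  exact sum_congr rfl fun e _ => by rw [hAnti d p]; ring

theorem scalarCurvature_derivAct_eq_zero [DecidableEq ι] {R : ι → ι → ι → ι → ℝ}
    {g ginv : ι → ι → ℝ} (hAnti : ∀ a b c d, R a b c d = -R b a c d)
    (hPair : ∀ a b c d, ∑ e, R a b c e * g e d = ∑ e, R c d a e * g e b)
    (hginvT : (of ginv)ᵀ = of ginv) (hginv : of ginv * of g = 1) (x y : ι)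
    (T : ι → ι → ι → ι → ℝ) : scalarCurvature ginv (derivAct (R x y) T) = 0 :=
  scalarCurvature_derivAct_eq_zero_of_skew hginvT
    (transpose_mul_eq_neg_of_mul_eq_one hginvT hginv (transpose_lowered_eq_neg hAnti hPair x y)) T

theorem divergence_eq_ricci_sub {T : ι → ι → ι → ι → ι → ℝ}
    (hAnti : ∀ y a b c d, T y a b c d = -T y b a c d)
    (hBianchi : ∀ a b c d e, T a b c d e + T b c a d e + T c a b d e = 0) (u v d : ι) :
    divergence T u v d = ricci (T v) u d - ricci (T u) v d := by
  have h := sum_eq_zero fun m (_ : m ∈ univ) => hBianchi u v m d m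
  have hswap : ∀ m, T v m u d m = -T v u m d m := fun m => hAnti v m u d m
  simp only [sum_add_distrib, hswap, sum_neg_distrib] at h
  rw [divergence, ricci, ricci]
  linarith

theorem divergence_cyclic {D : ι → ι → ι → ι → ι → ι → ℝ} {g S : ι → ι → ℝ} {κ : ℝ}
    (hAnti : ∀ x y a b c d, D x y a b c d = -D x y b a c d)
    (hBianchi : ∀ x a b c d e, D x a b c d e + D x b c a d e + D x c a b d e = 0)
    (hNCS : ∀ x a b c, ricci (D x a) b c - ricci (D x b) a c = κ * (g b c * S x a - g a c * S x b))
    (hS : ∀ x y, S x y = S y x) (a b c e : ι) :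
    divergence (D a) b c e + divergence (D b) c a e + divergence (D c) a b e = 0 := by
  rw [divergence_eq_ricci_sub (hAnti a) (hBianchi a),
    divergence_eq_ricci_sub (hAnti b) (hBianchi b), divergence_eq_ricci_sub (hAnti c) (hBianchi c)]
  linear_combination -hNCS a b c e - hNCS b c a e - hNCS c a b e
    - κ * (g b e * hS c a + g c e * hS a b + g a e * hS b c)

theorem pairing_comm (R : ι → ι → ι → ι → ℝ) (a b c d : ι) :
    pairing R a b c d = pairing R c d a b := by
  rw [pairing, pairing, sum_comm]
  exact sum_congr rfl fun m _ => sum_congr rfl fun k _ => mul_comm ..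

theorem quadratic_cyclic (R : ι → ι → ι → ι → ℝ) (a b c d : ι) :
    quadratic R a b c d + quadratic R b c a d + quadratic R c a b d = 0 := by
  unfold quadratic
  linear_combination pairing_comm R a b c d + pairing_comm R b d a c + pairing_comm R a d c b
    + pairing_comm R b c a d + pairing_comm R c d b a + pairing_comm R c a b d

theorem sum_derivAct_curvature {R : ι → ι → ι → ι → ℝ} (hAnti : ∀ a b c d, R a b c d = -R b a c d)
    (hBianchi : ∀ a b c d, R a b c d + R b c a d + R c a b d = 0) (a b c d : ι) :
    ∑ m, derivAct (R m a) R b c d m = -quadratic R a b c d - ∑ m, ricci R a m * R b c d m := by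
  have hsecond : ∑ m, ∑ k, R m a c k * R b k d m = -pairing R a c b d := by
    simp only [pairing, ← sum_neg_distrib]
    exact sum_congr rfl fun m _ => sum_congr rfl fun k _ => by rw [hAnti b k]; ring
  have hthird : ∑ m, ∑ k, R m a d k * R b c k m = pairing R a d c b - pairing R a d b c := by
    simp only [pairing, ← sum_sub_distrib]
    refine sum_congr rfl fun m _ => sum_congr rfl fun k _ => ?_
    linear_combination R m a d k * hBianchi k b c m - R m a d k * hAnti c k b m
  have hupper : ∑ m, ∑ k, R m a k m * R b c d k = -∑ k, ricci R a k * R b c d k := by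
    simp only [ricci, sum_comm (γ := ι) (f := fun m k => R m a k m * R b c d k), sum_mul,
      ← sum_neg_distrib]
    exact sum_congr rfl fun k _ => sum_congr rfl fun m _ => by rw [hAnti m a]; ring
  simp only [derivAct, sum_add_distrib, sum_sub_distrib, sum_neg_distrib]
  rw [← pairing, hsecond, hthird, hupper, quadratic]
  ring

end Curvature

open Curvature

theorem nearly_conformally_symmetric_identity_general {ι : Type*} [Fintype ι] [DecidableEq ι]
    (R : ι → ι → ι → ι → ℝ)            -- R a b c d = R_{abc}{}^d
    (D2R : ι → ι → ι → ι → ι → ι → ℝ)   -- D2R x y a b c d = ∇_x ∇_y R_{abc}{}^d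
    (hAnti : ∀ a b c d, R a b c d = - R b a c d)
    (hD2Anti : ∀ x y a b c d, D2R x y a b c d = - D2R x y b a c d)
    (hB1 : ∀ a b c d, R a b c d + R b c a d + R c a b d = 0)
    (hDB2 : ∀ x a b c d e,
      D2R x a b c d e + D2R x b c a d e + D2R x c a b d e = 0)
    (hComm : ∀ x y c d e f,
      D2R x y c d e f - D2R y x c d e f =
        - (∑ k, R x y c k * R k d e f) - (∑ k, R x y d k * R c k e f)
        - (∑ k, R x y e k * R c d k f) + (∑ k, R x y k f * R c d e k))
    (g ginv : ι → ι → ℝ)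
    (hginvsym : ∀ a b, ginv a b = ginv b a)
    (hginv : ∀ a b, (∑ m, ginv a m * g m b) = if a = b then (1:ℝ) else 0)
    (hPair : ∀ a b c d, (∑ e, R a b c e * g e d) = ∑ e, R c d a e * g e b)
    (hNCS2 : ∀ x a b c,
      (∑ m, D2R x a b m c m) - (∑ m, D2R x b a m c m)
      = (1 / (2 * ((Fintype.card ι : ℝ) - 1))) *
        (g b c * (∑ p, ∑ q, ginv p q * (∑ m, D2R x a p m q m))
         - g a c * (∑ p, ∑ q, ginv p q * (∑ m, D2R x b p m q m)))) :
    ∀ a b c e,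
      (∑ m, (∑ k, R a k m k) * R b c e m) + (∑ m, (∑ k, R b k m k) * R c a e m)
      + (∑ m, (∑ k, R c k m k) * R a b e m) = 0 := by
  intro a b c e
  have hginvT : (of ginv)ᵀ = of ginv := by ext p q; exact hginvsym q p
  have hginvMul : of ginv * of g = 1 := by ext p q; simp [mul_apply, one_apply, hginv]
  have hScal : ∀ x y, scalarCurvature ginv (D2R x y) = scalarCurvature ginv (D2R y x) := by
    intro x y
    have hcomm : D2R x y - D2R y x = derivAct (R x y) R := by
      funext c d e f; exact hComm x y c d e f
    rw [← sub_eq_zero, ← scalarCurvature_sub, hcomm]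
    exact scalarCurvature_derivAct_eq_zero hAnti hPair hginvT hginvMul x y R
  have hInnerCyclic := divergence_cyclic (S := fun x y => scalarCurvature ginv (D2R x y))
    hD2Anti hDB2 hNCS2 hScal a b c e
  have hOuterCyclic : ∑ m, D2R m a b c e m + ∑ m, D2R m b c a e m + ∑ m, D2R m c a b e m = 0 := by
    rw [← sum_add_distrib, ← sum_add_distrib]
    exact sum_eq_zero fun m _ => hDB2 m a b c e m
  have hSwap : ∀ x y z, ∑ m, D2R m x y z e m - divergence (D2R x) y z e
      = -quadratic R x y z e - ∑ m, ricci R x m * R y z e m := by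
    intro x y z
    rw [← sum_derivAct_curvature hAnti hB1, divergence, ← sum_sub_distrib]
    exact sum_congr rfl fun m _ => hComm m x y z e m
  show ∑ m, ricci R a m * R b c e m + ∑ m, ricci R b m * R c a e m
    + ∑ m, ricci R c m * R a b e m = 0
  linear_combination hSwap a b c + hSwap b c a + hSwap c a b - hOuterCyclic + hInnerCyclic
    - quadratic_cyclic R a b c e

theorem nearly_conformally_symmetric_identity {ι : Type*} [Fintype ι] [DecidableEq ι]
    (R : ι → ι → ι → ι → ℝ)            -- R a b c d = R_{abc}{}^d
    (DR : ι → ι → ι → ι → ι → ℝ)        -- DR x a b c d = ∇_x R_{abc}{}^d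
    (D2R : ι → ι → ι → ι → ι → ι → ℝ)   -- D2R x y a b c d = ∇_x ∇_y R_{abc}{}^d
    (hAnti : ∀ a b c d, R a b c d = - R b a c d)
    (hDAnti : ∀ x a b c d, DR x a b c d = - DR x b a c d)
    (hD2Anti : ∀ x y a b c d, D2R x y a b c d = - D2R x y b a c d)
    (hB1 : ∀ a b c d, R a b c d + R b c a d + R c a b d = 0)
    (hB2 : ∀ a b c d e, DR a b c d e + DR b c a d e + DR c a b d e = 0)
    (hDB2 : ∀ x a b c d e,
      D2R x a b c d e + D2R x b c a d e + D2R x c a b d e = 0)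
    (hComm : ∀ x y c d e f,
      D2R x y c d e f - D2R y x c d e f =
        - (∑ k, R x y c k * R k d e f) - (∑ k, R x y d k * R c k e f)
        - (∑ k, R x y e k * R c d k f) + (∑ k, R x y k f * R c d e k))
    (g ginv : ι → ι → ℝ)
    (hg : ∀ a b, g a b = g b a)
    (hginvsym : ∀ a b, ginv a b = ginv b a)
    (hginv : ∀ a b, (∑ m, ginv a m * g m b) = if a = b then (1:ℝ) else 0)
    (hPair : ∀ a b c d, (∑ e, R a b c e * g e d) = ∑ e, R c d a e * g e b)
    (hn : 1 < Fintype.card ι)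
    (hNCS : ∀ a b c,
      (∑ m, DR a b m c m) - (∑ m, DR b a m c m)
      = (1 / (2 * ((Fintype.card ι : ℝ) - 1))) *
        (g b c * (∑ p, ∑ q, ginv p q * (∑ m, DR a p m q m))
         - g a c * (∑ p, ∑ q, ginv p q * (∑ m, DR b p m q m))))
    (hNCS2 : ∀ x a b c,
      (∑ m, D2R x a b m c m) - (∑ m, D2R x b a m c m)
      = (1 / (2 * ((Fintype.card ι : ℝ) - 1))) *
        (g b c * (∑ p, ∑ q, ginv p q * (∑ m, D2R x a p m q m))
         - g a c * (∑ p, ∑ q, ginv p q * (∑ m, D2R x b p m q m)))) :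
    ∀ a b c e,
      (∑ m, (∑ k, R a k m k) * R b c e m) + (∑ m, (∑ k, R b k m k) * R c a e m)
      + (∑ m, (∑ k, R c k m k) * R a b e m) = 0 :=
  nearly_conformally_symmetric_identity_general R D2R hAnti hD2Anti hB1 hDB2 hComm g ginv hginvsym
    hginv hPair hNCS2
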